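/- Let n ≥ 1, let f : ℝⁿ → ℝ be lower semicontinuous, let x ∈ S^{n−1}, and let v ∈ ℝⁿ be a regular subgradient of f at x (i.e., liminf_{y → x, y ≠ x} (f(y) − f(x) − ⟨v, y − x⟩)/‖y − x‖ ≥ 0). Then the projection Proj_x(v) = v − ⟨v, x⟩x is a Riemannian Fréchet subgradient of f at x on the sphere: there exist δ > 0 and h : ℝⁿ → ℝ continuously differentiable on the open ball of radius δ centered at x such that f − h attains a local minimum at x relative to S^{n−1} and Proj_x(∇h(x)) = v − ⟨v, x⟩x. -/

import Mathlib

open Filter Topology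

/-- The orthogonal projection onto the tangent space of the unit sphere at `x`:
`Proj_x(v) = v − ⟨v, x⟩x`. -/
noncomputable def sphereProj {n : ℕ} (x v : EuclideanSpace ℝ (Fin n)) :
    EuclideanSpace ℝ (Fin n) :=
  v - (inner ℝ v x : ℝ) • x

/-- `v` is a regular subgradient of `f` at `x̄`:
`liminf_{y → x̄, y ≠ x̄} (f(y) − f(x̄) − ⟨v, y − x̄⟩)/‖y − x̄‖ ≥ 0`. -/
def IsRegularSubgradient {n : ℕ} (f : EuclideanSpace ℝ (Fin n) → ℝ)
    (x v : EuclideanSpace ℝ (Fin n)) : Prop :=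
  ∀ ε > (0 : ℝ), ∃ δ > (0 : ℝ), ∀ y, y ≠ x → ‖y - x‖ < δ →
    -ε * ‖y - x‖ ≤ f y - f x - (inner ℝ v (y - x) : ℝ)

/-- `v` is a Riemannian Fréchet subgradient of `f` at `x` on the unit sphere: there exist
`δ > 0` and `h` continuously differentiable on the open ball of radius `δ` centered at `x`
such that `f − h` attains a local minimum at `x` relative to the sphere and
`v = Proj_x(∇h(x))`. -/
def IsRFrechetSubgradient {n : ℕ} (f : EuclideanSpace ℝ (Fin n) → ℝ)
    (x v : EuclideanSpace ℝ (Fin n)) : Prop :=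
  ∃ δ > (0 : ℝ), ∃ h : EuclideanSpace ℝ (Fin n) → ℝ,
    ContDiffOn ℝ 1 h (Metric.ball x δ) ∧
    (∃ ε > (0 : ℝ), ∀ y, ‖y‖ = 1 → ‖y - x‖ < ε → f x - h x ≤ f y - h y) ∧
    v = sphereProj x (gradient h x)

/-!
A regular subgradient `v` gives `f y ≥ f x + ⟪v, y - x⟫ - ‖y - x‖ A(‖y - x‖)` near `x`, where
`A t` is the supremum of the negative part of the difference quotients at distance at most `t`:
a monotone modulus with `A t → 0`. Averaging `A` over `[t, 2t]` makes it continuous, and integrating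
once more yields a `C¹` function `φ` with `φ 0 = φ' 0 = 0` and `t A(t) ≤ φ t`. Then
`h y = ⟪v, y - x⟫ - φ ‖y - x‖` is `C¹` (the radial part is differentiable at `x` because `φ' 0 = 0`),
has gradient `v` at `x`, and `f - h` has a local minimum at `x` in the whole space, a fortiori on
the sphere. Since `∇h(x) = v`, projecting both sides gives the claim.
-/

open Set intervalIntegral

section Radial

variable {E : Type*} [NormedAddCommGroup E] [InnerProductSpace ℝ E] {φ : ℝ → ℝ}

theorem hasFDerivAt_comp_norm_zero (hφ : HasDerivAt φ 0 0) :
    HasFDerivAt (fun w : E => φ ‖w‖) (0 : E →L[ℝ] ℝ) 0 := by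
  rw [hasFDerivAt_iff_isLittleO_nhds_zero, ← Asymptotics.isLittleO_norm_right]
  rw [hasDerivAt_iff_isLittleO_nhds_zero] at hφ
  simpa [Function.comp_def] using hφ.comp_tendsto (tendsto_norm_zero (E := E))

theorem norm_fderiv_comp_norm_le (hφ : Differentiable ℝ φ) (h0 : deriv φ 0 = 0) (w : E) :
    ‖fderiv ℝ (fun w : E => φ ‖w‖) w‖ ≤ |deriv φ ‖w‖| := by
  rcases eq_or_ne w 0 with rfl | hw
  · simp [(hasFDerivAt_comp_norm_zero ((hφ 0).hasDerivAt.congr_deriv h0)).fderiv]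
  calc ‖fderiv ℝ (fun w : E => φ ‖w‖) w‖
      = ‖(fderiv ℝ φ ‖w‖).comp (fderiv ℝ (‖·‖) w)‖ := by
        rw [← fderiv_comp w (hφ _) ((contDiffAt_norm ℝ hw).differentiableAt one_ne_zero)]; rfl
    _ ≤ ‖fderiv ℝ φ ‖w‖‖ * ‖fderiv ℝ (‖·‖) w‖ := ContinuousLinearMap.opNorm_comp_le _ _
    _ ≤ |deriv φ ‖w‖| * 1 := by
        rw [← norm_deriv_eq_norm_fderiv, Real.norm_eq_abs]
        gcongr
        simpa using norm_fderiv_le_of_lipschitz ℝ (lipschitzWith_one_norm (E := E))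
    _ = |deriv φ ‖w‖| := mul_one _

theorem ContDiff.comp_norm_of_deriv_zero (hφ : ContDiff ℝ 1 φ) (h0 : deriv φ 0 = 0) :
    ContDiff ℝ 1 (fun w : E => φ ‖w‖) := by
  have hdiff : Differentiable ℝ φ := hφ.differentiable one_ne_zero
  have hzero : HasFDerivAt (fun w : E => φ ‖w‖) 0 0 :=
    hasFDerivAt_comp_norm_zero ((hdiff 0).hasDerivAt.congr_deriv h0)
  have hsmooth : ∀ w : E, w ≠ 0 → ContDiffAt ℝ 1 (fun w : E => φ ‖w‖) w := fun w hw =>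
    hφ.contDiffAt.comp w (contDiffAt_norm ℝ hw)
  rw [contDiff_one_iff_fderiv]
  refine ⟨fun w => ?_, continuous_iff_continuousAt.2 fun w => ?_⟩
  · rcases eq_or_ne w 0 with rfl | hw
    · exact hzero.differentiableAt
    · exact (hsmooth w hw).differentiableAt one_ne_zero
  rcases eq_or_ne w 0 with rfl | hw
  · have hlim : Tendsto (fun w : E => |deriv φ ‖w‖|) (𝓝 0) (𝓝 0) := by
      simpa [h0, Function.comp_def] using ((contDiff_one_iff_deriv.1 hφ).2.abs.tendsto 0).comp
        (tendsto_norm_zero (E := E))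
    rw [ContinuousAt, hzero.fderiv]
    exact squeeze_zero_norm (norm_fderiv_comp_norm_le hdiff h0) hlim
  · exact (hsmooth w hw).continuousAt_fderiv one_ne_zero

end Radial

noncomputable def dyadicAverage (A : ℝ → ℝ) (t : ℝ) : ℝ := t⁻¹ * ∫ s in t..2 * t, A s

section DyadicAverage

variable {A : ℝ → ℝ}

theorem Monotone.nonneg_of_eq_zero_of_nonpos (hA : Monotone A) (hA0 : ∀ t ≤ 0, A t = 0)
    (t : ℝ) : 0 ≤ A t := by
  rcases le_total t 0 with ht | ht
  · exact (hA0 t ht).ge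
  · exact hA0 0 le_rfl ▸ hA ht

theorem dyadicAverage_of_nonpos (hA0 : ∀ t ≤ 0, A t = 0) {t : ℝ} (ht : t ≤ 0) :
    dyadicAverage A t = 0 := by
  have hzero : EqOn A 0 (uIcc t (2 * t)) := fun s hs =>
    hA0 s (hs.2.trans (max_le ht (by linarith)))
  simp [dyadicAverage, integral_congr hzero]

theorem le_dyadicAverage (hA : Monotone A) {t : ℝ} (ht : 0 < t) : A t ≤ dyadicAverage A t := by
  rw [dyadicAverage, le_inv_mul_iff₀ ht]
  calc t * A t = ∫ _ in t..2 * t, A t := by rw [integral_const, smul_eq_mul]; ring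
    _ ≤ ∫ s in t..2 * t, A s :=
      integral_mono_on (by linarith) intervalIntegrable_const hA.intervalIntegrable
        fun s hs => hA hs.1

theorem dyadicAverage_le_of_pos (hA : Monotone A) {t : ℝ} (ht : 0 < t) :
    dyadicAverage A t ≤ A (2 * t) := by
  rw [dyadicAverage, inv_mul_le_iff₀ ht]
  calc ∫ s in t..2 * t, A s ≤ ∫ _ in t..2 * t, A (2 * t) :=
      integral_mono_on (by linarith) hA.intervalIntegrable intervalIntegrable_const
        fun s hs => hA hs.2
    _ = t * A (2 * t) := by rw [integral_const, smul_eq_mul]; ring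

theorem dyadicAverage_nonneg (hA : Monotone A) (hA0 : ∀ t ≤ 0, A t = 0) (t : ℝ) :
    0 ≤ dyadicAverage A t := by
  rcases le_or_gt t 0 with ht | ht
  · exact (dyadicAverage_of_nonpos hA0 ht).ge
  · exact (hA.nonneg_of_eq_zero_of_nonpos hA0 t).trans (le_dyadicAverage hA ht)

theorem dyadicAverage_le (hA : Monotone A) (hA0 : ∀ t ≤ 0, A t = 0) (t : ℝ) :
    dyadicAverage A t ≤ A (2 * t) := by
  rcases le_or_gt t 0 with ht | ht
  · rw [dyadicAverage_of_nonpos hA0 ht, hA0 _ (by linarith)]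
  · exact dyadicAverage_le_of_pos hA ht

theorem continuous_dyadicAverage (hA : Monotone A) (hA0 : ∀ t ≤ 0, A t = 0)
    (hlim : Tendsto A (𝓝 0) (𝓝 0)) : Continuous (dyadicAverage A) := by
  refine continuous_iff_continuousAt.2 fun t => ?_
  rcases eq_or_ne t 0 with rfl | ht
  · have hlim2 : Tendsto (fun t => A (2 * t)) (𝓝 0) (𝓝 0) :=
      hlim.comp (by simpa using (continuous_const_mul (2 : ℝ)).tendsto 0)
    rw [ContinuousAt, dyadicAverage_of_nonpos hA0 le_rfl]
    exact squeeze_zero (dyadicAverage_nonneg hA hA0) (dyadicAverage_le hA hA0) hlim2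
  · set F := fun u => ∫ s in (0 : ℝ)..u, A s
    have hF : Continuous F := continuous_primitive (fun _ _ => hA.intervalIntegrable) 0
    have hprimitive : dyadicAverage A = fun u => u⁻¹ * (F (2 * u) - F u) := by
      ext u
      rw [dyadicAverage, integral_interval_sub_left hA.intervalIntegrable hA.intervalIntegrable]
    rw [hprimitive]
    exact (continuousAt_inv₀ ht).mul ((hF.comp (continuous_const_mul 2)).sub hF).continuousAt

end DyadicAverage

theorem exists_contDiff_majorant {A : ℝ → ℝ} (hA : Monotone A) (hA0 : ∀ t ≤ 0, A t = 0)
    (hlim : Tendsto A (𝓝 0) (𝓝 0)) :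
    ∃ φ : ℝ → ℝ, ContDiff ℝ 1 φ ∧ φ 0 = 0 ∧ deriv φ 0 = 0 ∧ ∀ t, 0 < t → t * A t ≤ φ t := by
  set g := dyadicAverage A
  have hg : Continuous g := continuous_dyadicAverage hA hA0 hlim
  set φ := fun t => ∫ s in (0 : ℝ)..2 * t, g s
  have hderiv : ∀ t, HasDerivAt φ (g (2 * t) * 2) t := fun t =>
    (hg.integral_hasStrictDerivAt 0 (2 * t)).hasDerivAt.comp t
      ((hasDerivAt_id t).const_mul 2 |>.congr_deriv (mul_one 2))
  have hderiv_eq : deriv φ = fun t => g (2 * t) * 2 := funext fun t => (hderiv t).deriv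
  refine ⟨φ, ?_, by simp [φ], ?_, fun t ht => ?_⟩
  · exact contDiff_one_iff_deriv.2 ⟨fun t => (hderiv t).differentiableAt,
      hderiv_eq ▸ (hg.comp (continuous_const_mul 2)).mul continuous_const⟩
  · simp [hderiv_eq, g, dyadicAverage_of_nonpos hA0 le_rfl]
  -- `φ t ≥ ∫ s in t..2t, g s ≥ t * A t`, because `A t ≤ A s ≤ g s` for `s ≥ t`
  have hsplit := integral_add_adjacent_intervals (μ := MeasureTheory.volume)
    (hg.intervalIntegrable 0 t) (hg.intervalIntegrable t (2 * t))
  have hhead : 0 ≤ ∫ s in (0 : ℝ)..t, g s :=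
    integral_nonneg ht.le fun s _ => dyadicAverage_nonneg hA hA0 s
  have htail : ∫ _ in t..2 * t, A t ≤ ∫ s in t..2 * t, g s :=
    integral_mono_on (by linarith) intervalIntegrable_const (hg.intervalIntegrable _ _)
      fun s hs => (hA hs.1).trans (le_dyadicAverage hA (ht.trans_le hs.1))
  rw [integral_const, smul_eq_mul, show 2 * t - t = t by ring] at htail
  change t * A t ≤ ∫ s in (0 : ℝ)..2 * t, g s
  linarith

noncomputable def punctBallSup {X : Type*} [PseudoMetricSpace X] (q : X → ℝ) (x : X) (t : ℝ) :
    ℝ :=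
  sSup (insert 0 (q '' {y | 0 < dist y x ∧ dist y x ≤ t}))

section PunctBallSup

variable {X : Type*} [PseudoMetricSpace X] {q : X → ℝ} {x : X}

theorem bddAbove_insert_zero_image (hq : BddAbove (range q)) (t : ℝ) :
    BddAbove (insert 0 (q '' {y | 0 < dist y x ∧ dist y x ≤ t})) :=
  (hq.mono (image_subset_range _ _)).insert 0

theorem punctBallSup_of_nonpos {t : ℝ} (ht : t ≤ 0) : punctBallSup q x t = 0 := by
  have hempty : {y | 0 < dist y x ∧ dist y x ≤ t} = ∅ :=
    eq_empty_of_forall_notMem fun y hy => by linarith [hy.1, hy.2]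
  simp [punctBallSup, hempty]

theorem punctBallSup_nonneg (hq : BddAbove (range q)) (t : ℝ) : 0 ≤ punctBallSup q x t :=
  le_csSup (bddAbove_insert_zero_image hq t) (mem_insert _ _)

theorem le_punctBallSup (hq : BddAbove (range q)) {y : X} (hy : 0 < dist y x) :
    q y ≤ punctBallSup q x (dist y x) :=
  le_csSup (bddAbove_insert_zero_image hq _) (mem_insert_of_mem _ ⟨y, ⟨hy, le_rfl⟩, rfl⟩)

theorem monotone_punctBallSup (hq : BddAbove (range q)) : Monotone (punctBallSup q x) :=
  fun _ t hst => csSup_le_csSup (bddAbove_insert_zero_image hq t) (insert_nonempty _ _)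
    (insert_subset_insert (image_mono fun _ hy => ⟨hy.1, hy.2.trans hst⟩))

theorem tendsto_punctBallSup (hq : BddAbove (range q))
    (hsmall : ∀ ε > 0, ∃ δ > 0, ∀ y, 0 < dist y x → dist y x < δ → q y ≤ ε) :
    Tendsto (punctBallSup q x) (𝓝 0) (𝓝 0) := by
  refine tendsto_order.2 ⟨fun a ha => .of_forall fun t => ha.trans_le (punctBallSup_nonneg hq t),
    fun a ha => ?_⟩
  obtain ⟨δ, hδ, hδq⟩ := hsmall (a / 2) (half_pos ha)
  filter_upwards [Iio_mem_nhds hδ] with t ht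
  refine (csSup_le (insert_nonempty _ _) ?_).trans_lt (half_lt_self ha)
  rintro _ (rfl | ⟨y, ⟨hy, hyt⟩, rfl⟩)
  · exact (half_pos ha).le
  · exact hδq y hy (hyt.trans_lt ht)

end PunctBallSup

section RegularSubgradient

variable {n : ℕ} {f : EuclideanSpace ℝ (Fin n) → ℝ} {x v : EuclideanSpace ℝ (Fin n)}

theorem IsRegularSubgradient.exists_modulus (hv : IsRegularSubgradient f x v) :
    ∃ A : ℝ → ℝ, Monotone A ∧ (∀ t ≤ 0, A t = 0) ∧ Tendsto A (𝓝 0) (𝓝 0) ∧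
      ∃ ρ > 0, ∀ y, ‖y - x‖ < ρ → f x + inner ℝ v (y - x) - f y ≤ ‖y - x‖ * A ‖y - x‖ := by
  set e := fun y => f x + inner ℝ v (y - x) - f y
  have hquot : ∀ ε > 0, ∃ δ > 0, ∀ y, 0 < dist y x → dist y x < δ → e y / dist y x ≤ ε := by
    intro ε hε
    obtain ⟨δ, hδ, hδv⟩ := hv ε hε
    refine ⟨δ, hδ, fun y hy hyδ => ?_⟩
    have := hδv y (dist_pos.1 hy) (dist_eq_norm y x ▸ hyδ)
    rw [div_le_iff₀ hy, dist_eq_norm]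
    linarith
  -- capping the quotient at 1 keeps the suprema finite without changing it near `x`
  set q := fun y => min (e y / dist y x) 1
  have hq : BddAbove (range q) := ⟨1, by rintro _ ⟨y, rfl⟩; exact min_le_right _ _⟩
  refine ⟨punctBallSup q x, monotone_punctBallSup hq, fun t => punctBallSup_of_nonpos,
    tendsto_punctBallSup hq fun ε hε => ?_, ?_⟩
  · obtain ⟨δ, hδ, hδq⟩ := hquot ε hε
    exact ⟨δ, hδ, fun y hy hyδ => min_le_of_left_le (hδq y hy hyδ)⟩
  obtain ⟨ρ, hρ, hρq⟩ := hquot 1 one_pos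
  refine ⟨ρ, hρ, fun y hy => ?_⟩
  rcases eq_or_ne y x with rfl | hyx
  · simp
  have hpos : 0 < dist y x := dist_pos.2 hyx
  have hqy : q y = e y / dist y x := min_eq_left (hρq y hpos (by rwa [dist_eq_norm]))
  have hle := le_punctBallSup hq hpos
  rw [hqy, div_le_iff₀ hpos, dist_eq_norm] at hle
  linarith

theorem IsRegularSubgradient.exists_contDiff_support (hv : IsRegularSubgradient f x v) :
    ∃ h : EuclideanSpace ℝ (Fin n) → ℝ, ContDiff ℝ 1 h ∧ gradient h x = v ∧
      ∃ ε > 0, ∀ y, ‖y - x‖ < ε → f x - h x ≤ f y - h y := by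
  obtain ⟨A, hA, hA0, hlim, ρ, hρ, hρA⟩ := hv.exists_modulus
  obtain ⟨φ, hφ, hφ0, hφ'0, hφA⟩ := exists_contDiff_majorant hA hA0 hlim
  have hshift : HasFDerivAt (fun y : EuclideanSpace ℝ (Fin n) => y - x)
      (ContinuousLinearMap.id ℝ _) x := (hasFDerivAt_id x).sub_const x
  have hlin : HasFDerivAt (fun y => inner ℝ v (y - x)) (innerSL ℝ v) x :=
    (innerSL ℝ v).hasFDerivAt.comp x hshift
  have hrad : HasFDerivAt (fun y => φ ‖y - x‖) (0 : EuclideanSpace ℝ (Fin n) →L[ℝ] ℝ) x := by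
    have h0 := hasFDerivAt_comp_norm_zero (E := EuclideanSpace ℝ (Fin n))
      (((hφ.differentiable one_ne_zero) 0).hasDerivAt.congr_deriv hφ'0)
    rw [← sub_self x] at h0
    simpa [Function.comp_def] using h0.comp (f := fun y => y - x) x hshift
  refine ⟨fun y => inner ℝ v (y - x) - φ ‖y - x‖, ?_, ?_, ρ, hρ, fun y hy => ?_⟩
  · exact ((innerSL ℝ v).contDiff.comp (contDiff_id.sub contDiff_const)).sub
      ((hφ.comp_norm_of_deriv_zero hφ'0).comp (contDiff_id.sub contDiff_const))
  · exact (hasGradientAt_iff_hasFDerivAt.2 ((hlin.sub hrad).congr_fderiv (sub_zero _))).gradient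
  rcases eq_or_ne y x with rfl | hyx
  · exact le_rfl
  have hmajor := hφA _ (norm_pos_iff.2 (sub_ne_zero.2 hyx))
  have hmodulus := hρA y hy
  simp only [sub_self, inner_zero_right, norm_zero, hφ0]
  linarith

end RegularSubgradient

theorem projection_of_regular_subgradient_is_RFrechet_general (n : ℕ)
    (f : EuclideanSpace ℝ (Fin n) → ℝ)
    (x : EuclideanSpace ℝ (Fin n))
    (v : EuclideanSpace ℝ (Fin n)) (hv : IsRegularSubgradient f x v) :
    IsRFrechetSubgradient f x (sphereProj x v) := by
  obtain ⟨h, hh, hgrad, ε, hε, hmin⟩ := hv.exists_contDiff_support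
  exact ⟨1, one_pos, h, hh.contDiffOn, ⟨ε, hε, fun y _ hy => hmin y hy⟩, by rw [hgrad]⟩

/-- If `f : ℝⁿ → ℝ` is lower semicontinuous, `x ∈ S^{n−1}`, and `v` is a regular
subgradient of `f` at `x`, then `Proj_x(v) = v − ⟨v, x⟩x` is a Riemannian Fréchet
subgradient of `f` at `x` on the sphere. -/
theorem projection_of_regular_subgradient_is_RFrechet (n : ℕ) (hn : 1 ≤ n)
    (f : EuclideanSpace ℝ (Fin n) → ℝ) (hf : LowerSemicontinuous f)
    (x : EuclideanSpace ℝ (Fin n)) (hx : ‖x‖ = 1)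
    (v : EuclideanSpace ℝ (Fin n)) (hv : IsRegularSubgradient f x v) :
    IsRFrechetSubgradient f x (sphereProj x v) :=
  projection_of_regular_subgradient_is_RFrechet_general n f x v hv
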